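/- arXiv:2409.03042 — 2 statements merged into one kernel-verified Lean document; each statement's English description precedes it below -/
import Mathlib

section
/- Let t0 ∈ ℝ, let ξ : [t0, ∞) → [0, ∞) be absolutely continuous, let β : [t0, ∞) → [0, ∞) be locally integrable, and let C, M, T be positive constants such that sup_{t ≥ t0} ∫_t^{t+T} β(s) ds ≤ M and ξ'(t) + C·ξ(t) ≤ β(t) for almost every t ≥ t0. Then for all t ≥ t0 one has ξ(t) ≤ e^{−C(t−t0)}·ξ(t0) + M·e^{2CT}/(e^{CT} − 1). -/
/-!
Since `ξ ≥ 0`, the inequality gives `ξ' ≤ β`, so the positive part of `ξ'` is locally integrable and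
`ξ(s) - ξ(t₀) = ∫ ξ'` bounds its negative part; hence `ξ'` is locally integrable and `ξ` is
absolutely continuous. The integrating factor `e^{Ct}` then yields
`ξ(b) ≤ e^{-C(b-a)} ξ(a) + M` whenever `t₀ ≤ a ≤ b ≤ a + T`, and chaining this over windows of
length `T` accumulates at most `M ∑ₖ e^{-CkT} = M e^{CT} / (e^{CT} - 1)`.
-/

open MeasureTheory Real

open Set Filter

theorem AbsolutelyContinuousOnInterval.congr {X : Type*} [PseudoMetricSpace X] {f g : ℝ → X}
    {a b : ℝ} (hf : AbsolutelyContinuousOnInterval f a b) (h : EqOn f g (uIcc a b)) :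
    AbsolutelyContinuousOnInterval g a b := by
  refine Tendsto.congr' ?_ hf
  filter_upwards [mem_inf_of_right (mem_principal_self _)] with E hE
  exact Finset.sum_congr rfl fun i hi => by rw [h (hE.1 i hi).1, h (hE.1 i hi).2]

theorem absolutelyContinuousOnInterval_of_sub_eq_integral {f f' : ℝ → ℝ} {a b : ℝ}
    (hf' : IntervalIntegrable f' volume a b)
    (hftc : ∀ t ∈ uIcc a b, f t - f a = ∫ s in a..t, f' s) :
    AbsolutelyContinuousOnInterval f a b := by
  have hconst : AbsolutelyContinuousOnInterval (fun _ => f a) a b :=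
    contDiffOn_const.absolutelyContinuousOnInterval
  refine (hconst.fun_add (hf'.absolutelyContinuousOnInterval_intervalIntegral
    left_mem_uIcc)).congr fun t ht => ?_
  show f a + ∫ s in a..t, f' s = f t
  linarith [hftc t ht]

theorem intervalIntegrable_of_intervalIntegral_norm_bounded_right {E : Type*}
    [NormedAddCommGroup E] {f : ℝ → E} {a b B : ℝ} (hab : a ≤ b)
    (hf : ∀ s ∈ Ico a b, IntervalIntegrable f volume a s)
    (hB : ∀ s ∈ Ico a b, ∫ x in a..s, ‖f x‖ ≤ B) :
    IntervalIntegrable f volume a b := by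
  rcases hab.eq_or_lt with rfl | hlt
  · exact .refl
  obtain ⟨u, -, hu, hlim⟩ := exists_seq_strictMono_tendsto' hlt
  have hu' : ∀ n, u n ∈ Ico a b := fun n => ⟨(hu n).1.le, (hu n).2⟩
  rw [intervalIntegrable_iff_integrableOn_Ioc_of_le hab]
  refine integrableOn_Ioc_of_intervalIntegral_norm_bounded_right (I := B) (fun n => ?_) hlim
    (Eventually.of_forall fun n => ?_)
  · exact (intervalIntegrable_iff_integrableOn_Ioc_of_le (hu' n).1).1 (hf _ (hu' n))
  · rw [← intervalIntegral.integral_of_le (hu' n).1]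
    exact hB _ (hu' n)

theorem integral_norm_le_two_mul_integral_abs_sub_integral {f g : ℝ → ℝ} {a b : ℝ}
    (hab : a ≤ b) (hf : IntervalIntegrable f volume a b) (hg : IntervalIntegrable g volume a b)
    (hle : ∀ᵐ t, t ∈ Icc a b → f t ≤ g t) :
    ∫ x in a..b, ‖f x‖ ≤ 2 * (∫ x in a..b, |g x|) - ∫ x in a..b, f x := by
  rw [← intervalIntegral.integral_const_mul 2, ← intervalIntegral.integral_sub
    (hg.abs.const_mul 2) hf]
  refine intervalIntegral.integral_mono_ae_restrict hab hf.norm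
    ((hg.abs.const_mul 2).sub hf) ?_
  filter_upwards [ae_restrict_of_ae hle, ae_restrict_mem measurableSet_Icc] with t ht hmem
  have := ht hmem
  rw [Real.norm_eq_abs]
  cases abs_cases (f t) <;> cases abs_cases (g t) <;> linarith

theorem ae_eq_zero_of_hasDerivAt_of_eqOn_const {E : Type*} [NormedAddCommGroup E]
    [NormedSpace ℝ E] {f f' : ℝ → E} {U : Set ℝ} {c : E} (hU : IsOpen U)
    (hc : EqOn f (fun _ => c) U) (hderiv : ∀ᵐ t, t ∈ U → HasDerivAt f (f' t) t) :
    ∀ᵐ t, t ∈ U → f' t = 0 := by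
  filter_upwards [hderiv] with t ht htU
  exact (ht htU).unique
    ((hasDerivAt_const t c).congr_of_eventuallyEq (hc.eventuallyEq_of_mem (hU.mem_nhds htU)))

theorem intervalIntegrable_of_ae_hasDerivAt_of_sub_eq_integral {f f' g : ℝ → ℝ} {a b m : ℝ}
    (hab : a ≤ b) (hderiv : ∀ᵐ t, t ∈ Icc a b → HasDerivAt f (f' t) t)
    (hftc : ∀ t ∈ Icc a b, f t - f a = ∫ s in a..t, f' s) (hm : ∀ t ∈ Icc a b, m ≤ f t)
    (hg : IntervalIntegrable g volume a b) (hle : ∀ᵐ t, t ∈ Icc a b → f' t ≤ g t) :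
    IntervalIntegrable f' volume a b := by
  -- Past the first point where `f'` stops being integrable, `hftc` only sees the junk value `0`,
  -- so `f` is constant there and `f'` vanishes a.e.
  by_contra hnot
  set S := {s | s ∈ Icc a b ∧ ¬ IntervalIntegrable f' volume a s}
  have hbS : b ∈ S := ⟨⟨hab, le_rfl⟩, hnot⟩
  have hSbdd : BddBelow S := ⟨a, fun s hs => hs.1.1⟩
  set s₁ := sInf S
  have has₁ : a ≤ s₁ := le_csInf ⟨b, hbS⟩ fun s hs => hs.1.1
  have hs₁b : s₁ ≤ b := csInf_le hSbdd hbS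
  have below : ∀ s ∈ Ico a s₁, IntervalIntegrable f' volume a s := fun s hs => by
    by_contra h
    exact not_le.2 hs.2 (csInf_le hSbdd ⟨⟨hs.1, hs.2.le.trans hs₁b⟩, h⟩)
  have above : EqOn f (fun _ => f a) (Ioo s₁ b) := fun s hs => by
    obtain ⟨s', hs'S, hs's⟩ := exists_lt_of_csInf_lt ⟨b, hbS⟩ hs.1
    have hs'' : ¬ IntervalIntegrable f' volume a s := fun h =>
      hs'S.2 (h.mono_set (uIcc_subset_uIcc_left (by
        rw [uIcc_of_le (has₁.trans hs.1.le)]; exact ⟨hs'S.1.1, hs's.le⟩)))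
    have := hftc s ⟨has₁.trans hs.1.le, hs.2.le⟩
    rw [intervalIntegral.integral_undef hs''] at this
    show f s = f a
    linarith
  have bound : ∀ s ∈ Ico a s₁, ∫ x in a..s, ‖f' x‖ ≤ 2 * (∫ x in a..b, |g x|) + f a - m :=
    fun s hs => by
    have hsb : s ∈ Icc a b := ⟨hs.1, hs.2.le.trans hs₁b⟩
    have hsub : Icc a s ⊆ Icc a b := Icc_subset_Icc_right hsb.2
    have hgs : IntervalIntegrable g volume a s :=
      hg.mono_set (by rw [uIcc_of_le hab, uIcc_of_le hs.1]; exact hsub)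
    have hgmono : ∫ x in a..s, |g x| ≤ ∫ x in a..b, |g x| :=
      intervalIntegral.integral_mono_interval le_rfl hs.1 hsb.2
        (Eventually.of_forall fun x => abs_nonneg (g x)) hg.abs
    have := integral_norm_le_two_mul_integral_abs_sub_integral hs.1 (below s hs) hgs
      (hle.mono fun t ht hts => ht (hsub hts))
    linarith [hftc s hsb, hm s hsb]
  have hleft : IntervalIntegrable f' volume a s₁ :=
    intervalIntegrable_of_intervalIntegral_norm_bounded_right has₁ below bound
  have hright : IntervalIntegrable f' volume s₁ b := by
    have hzero := ae_eq_zero_of_hasDerivAt_of_eqOn_const isOpen_Ioo above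
      (hderiv.mono fun t ht hts => ht (Ioo_subset_Icc_self.trans
        (Icc_subset_Icc_left has₁) hts))
    rw [intervalIntegrable_iff_integrableOn_Ioo_of_le hs₁b]
    exact (integrableOn_zero).congr_fun_ae
      ((ae_restrict_iff' measurableSet_Ioo).2 (hzero.mono fun t ht hts => (ht hts).symm))
  exact hnot (hleft.trans hright)

theorem exp_mul_sub_exp_mul_le_integral_of_deriv_add_mul_le {f f' g : ℝ → ℝ} {C a b : ℝ}
    (hab : a ≤ b) (hf : AbsolutelyContinuousOnInterval f a b)
    (hderiv : ∀ᵐ t, t ∈ Icc a b → HasDerivAt f (f' t) t) (hg : IntervalIntegrable g volume a b)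
    (hle : ∀ᵐ t, t ∈ Icc a b → f' t + C * f t ≤ g t) :
    exp (C * b) * f b - exp (C * a) * f a ≤ ∫ t in a..b, exp (C * t) * g t := by
  have hexp : AbsolutelyContinuousOnInterval (fun t => exp (C * t)) a b :=
    ContDiffOn.absolutelyContinuousOnInterval (by fun_prop)
  have hprod := hexp.fun_mul hf
  rw [← hprod.integral_deriv_eq_sub]
  refine intervalIntegral.integral_mono_ae_restrict hab hprod.intervalIntegrable_deriv
    (hg.continuousOn_mul (by fun_prop)) ?_
  filter_upwards [ae_restrict_of_ae hderiv, ae_restrict_of_ae hle,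
    ae_restrict_mem measurableSet_Icc] with t hd hl ht
  have hprod_deriv : HasDerivAt (fun t => exp (C * t) * f t)
      (exp (C * t) * (C * 1) * f t + exp (C * t) * f' t) t :=
    ((hasDerivAt_id t).const_mul C).exp.mul (hd ht)
  rw [hprod_deriv.deriv]
  calc _ = exp (C * t) * (f' t + C * f t) := by ring
    _ ≤ exp (C * t) * g t := by gcongr; exact hl ht

theorem le_exp_mul_add_integral_of_deriv_add_mul_le {f f' g : ℝ → ℝ} {C a b : ℝ}
    (hC : 0 ≤ C) (hab : a ≤ b) (hf : AbsolutelyContinuousOnInterval f a b)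
    (hderiv : ∀ᵐ t, t ∈ Icc a b → HasDerivAt f (f' t) t) (hg : IntervalIntegrable g volume a b)
    (hg₀ : ∀ t ∈ Icc a b, 0 ≤ g t) (hle : ∀ᵐ t, t ∈ Icc a b → f' t + C * f t ≤ g t) :
    f b ≤ exp (-C * (b - a)) * f a + ∫ t in a..b, g t := by
  have hweight : ∫ t in a..b, exp (C * t) * g t ≤ exp (C * b) * ∫ t in a..b, g t := by
    rw [← intervalIntegral.integral_const_mul]
    refine intervalIntegral.integral_mono_on hab (hg.continuousOn_mul (by fun_prop))
      (hg.const_mul _) fun t ht => ?_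
    exact mul_le_mul_of_nonneg_right (exp_le_exp.2 (by nlinarith [ht.2])) (hg₀ t ht)
  have hfactor := exp_mul_sub_exp_mul_le_integral_of_deriv_add_mul_le hab hf hderiv hg hle
  have hshift : exp (C * b) * exp (-C * (b - a)) = exp (C * a) := by
    rw [← exp_add]; ring_nf
  refine le_of_mul_le_mul_left ?_ (exp_pos (C * b))
  rw [mul_add, ← mul_assoc, hshift]
  linarith

theorem le_exp_mul_add_of_forall_le_exp_mul_add {u : ℝ → ℝ} {t₀ C M T : ℝ} (hC : 0 < C)
    (hT : 0 < T)
    (hstep : ∀ a b, t₀ ≤ a → a ≤ b → b ≤ a + T → u b ≤ exp (-C * (b - a)) * u a + M)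
    (t : ℝ) (ht : t₀ ≤ t) :
    u t ≤ exp (-C * (t - t₀)) * u t₀ + M * (exp (C * T) / (exp (C * T) - 1)) := by
  set S := exp (C * T) / (exp (C * T) - 1)
  have hden : 0 < exp (C * T) - 1 := by linarith [one_lt_exp_iff.2 (mul_pos hC hT)]
  have hM : 0 ≤ M := by simpa using hstep t₀ t₀ le_rfl le_rfl (by linarith)
  have hS : 1 ≤ S := by rw [le_div_iff₀ hden]; linarith
  -- `S` is the sum of the geometric series `∑ₖ exp (-C T k)`.
  have hgeom : exp (-C * T) * S + 1 = S := by
    simp only [S, neg_mul, exp_neg]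
    field_simp
    ring
  have short : ∀ t, t₀ ≤ t → t ≤ t₀ + T → u t ≤ exp (-C * (t - t₀)) * u t₀ + M * S :=
    fun t ht htT => (hstep t₀ t le_rfl ht htT).trans (by nlinarith)
  have windows : ∀ k : ℕ, ∀ t, t₀ ≤ t → t ≤ t₀ + (k + 1) * T →
      u t ≤ exp (-C * (t - t₀)) * u t₀ + M * S := by
    intro k
    induction k with
    | zero => simpa using short
    | succ k ih =>
      intro t ht htk
      rcases le_or_gt t (t₀ + T) with htT | htT
      · exact short t ht htT
      have hprev := ih (t - T) (by linarith) (by push_cast at htk; linarith)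
      have hexp : exp (-C * T) * exp (-C * (t - T - t₀)) = exp (-C * (t - t₀)) := by
        rw [← exp_add]; ring_nf
      calc u t ≤ exp (-C * T) * u (t - T) + M := by
            simpa using hstep (t - T) t (by linarith) (by linarith) (by linarith)
        _ ≤ exp (-C * T) * (exp (-C * (t - T - t₀)) * u t₀ + M * S) + M := by gcongr
        _ = exp (-C * (t - t₀)) * u t₀ + M * (exp (-C * T) * S + 1) := by
            rw [← hexp]; ring
        _ = exp (-C * (t - t₀)) * u t₀ + M * S := by rw [hgeom]
  obtain ⟨k, hk⟩ := exists_nat_ge ((t - t₀) / T)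
  exact windows k t ht (by rw [div_le_iff₀ hT] at hk; nlinarith)

/-- Uniform-in-time Gronwall-type lemma (Lemma 2.1 of the paper):
if ξ : [t0,∞) → [0,∞) is absolutely continuous (encoded by: ξ has derivative ξ' a.e. on
[t0,∞) and satisfies the fundamental theorem of calculus there), β : [t0,∞) → [0,∞) is
locally integrable, sup_{t ≥ t0} ∫_t^{t+T} β ≤ M, and ξ' + C ξ ≤ β a.e. on [t0,∞), then
ξ(t) ≤ e^{-C(t-t0)} ξ(t0) + M e^{2CT}/(e^{CT} - 1) for all t ≥ t0. -/
theorem gronwall_uniform_in_time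
    (t0 : ℝ) (ξ ξ' β : ℝ → ℝ) (C M T : ℝ)
    (hC : 0 < C) (hM : 0 < M) (hT : 0 < T)
    (hξ_nonneg : ∀ t, t0 ≤ t → 0 ≤ ξ t)
    (hβ_nonneg : ∀ t, t0 ≤ t → 0 ≤ β t)
    (hβ_loc : LocallyIntegrableOn β (Set.Ici t0))
    (hξ_deriv : ∀ᵐ t ∂(volume : Measure ℝ), t0 ≤ t → HasDerivAt ξ (ξ' t) t)
    (hξ_ftc : ∀ t, t0 ≤ t → ξ t - ξ t0 = ∫ s in t0..t, ξ' s)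
    (hsup : ∀ t, t0 ≤ t → ∫ s in t..(t + T), β s ≤ M)
    (hineq : ∀ᵐ t ∂(volume : Measure ℝ), t0 ≤ t → ξ' t + C * ξ t ≤ β t) :
    ∀ t, t0 ≤ t →
      ξ t ≤ Real.exp (-C * (t - t0)) * ξ t0 +
        M * (Real.exp (2 * C * T) / (Real.exp (C * T) - 1)) := by
  have hβ_int : ∀ a b, t0 ≤ a → a ≤ b → IntervalIntegrable β volume a b := fun a b ha hab =>
    (intervalIntegrable_iff_integrableOn_Icc_of_le hab).2
      (hβ_loc.integrableOn_compact_subset ((Icc_subset_Ici_iff hab).2 ha) isCompact_Icc)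
  have hξ'_int : ∀ b, t0 ≤ b → IntervalIntegrable ξ' volume t0 b := fun b hb =>
    intervalIntegrable_of_ae_hasDerivAt_of_sub_eq_integral hb
      (hξ_deriv.mono fun t h ht => h ht.1) (fun t ht => hξ_ftc t ht.1)
      (fun t ht => hξ_nonneg t ht.1) (hβ_int t0 b le_rfl hb)
      (hineq.mono fun t h ht => by nlinarith [h ht.1, hξ_nonneg t ht.1])
  have hξ_ac : ∀ a b, t0 ≤ a → a ≤ b → AbsolutelyContinuousOnInterval ξ a b := fun a b ha hab =>
    (absolutelyContinuousOnInterval_of_sub_eq_integral (hξ'_int b (ha.trans hab))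
      fun t ht => hξ_ftc t (by rw [uIcc_of_le (ha.trans hab)] at ht; exact ht.1)).mono
      (uIcc_subset_uIcc (by rw [uIcc_of_le (ha.trans hab)]; exact ⟨ha, hab⟩)
        right_mem_uIcc)
  have hstep : ∀ a b, t0 ≤ a → a ≤ b → b ≤ a + T → ξ b ≤ exp (-C * (b - a)) * ξ a + M := by
    intro a b ha hab hbT
    have hβ_window : ∫ s in a..b, β s ≤ M :=
      (intervalIntegral.integral_mono_interval le_rfl hab hbT
        ((ae_restrict_mem measurableSet_Ioc).mono fun s hs => hβ_nonneg s (ha.trans hs.1.le))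
        (hβ_int a (a + T) ha (hab.trans hbT))).trans (hsup a ha)
    have := le_exp_mul_add_integral_of_deriv_add_mul_le hC.le hab (hξ_ac a b ha hab)
      (hξ_deriv.mono fun t h ht => h (ha.trans ht.1)) (hβ_int a b ha hab)
      (fun t ht => hβ_nonneg t (ha.trans ht.1)) (hineq.mono fun t h ht => h (ha.trans ht.1))
    linarith
  intro t ht
  calc ξ t ≤ exp (-C * (t - t0)) * ξ t0 + M * (exp (C * T) / (exp (C * T) - 1)) :=
        le_exp_mul_add_of_forall_le_exp_mul_add hC hT hstep t ht
    _ ≤ exp (-C * (t - t0)) * ξ t0 + M * (exp (2 * C * T) / (exp (C * T) - 1)) := by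
        gcongr
        · linarith [one_lt_exp_iff.2 (mul_pos hC hT)]
        · linarith
end

section
/- Let t0 ∈ ℝ, let β : [t0, ∞) → [0, ∞) be locally integrable, and let C, M, T be positive constants such that ∫_t^{t+T} β(s) ds ≤ M for every t ≥ t0. Then for every t ≥ t0, ∫_{t0}^{t} e^{C(s−t)} β(s) ds ≤ M·e^{2CT}/(e^{CT} − 1). -/
open MeasureTheory Real

/-- Key integral estimate in the proof of the paper's Gronwall-type lemma: if
β : [t0,∞) → [0,∞) is locally integrable and ∫_t^{t+T} β ≤ M for every t ≥ t0, then
∫_{t0}^{t} e^{C(s-t)} β(s) ds ≤ M e^{2CT}/(e^{CT} - 1) for every t ≥ t0. -/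
theorem exp_kernel_integral_bound
    (t0 : ℝ) (β : ℝ → ℝ) (C M T : ℝ)
    (hC : 0 < C) (hM : 0 < M) (hT : 0 < T)
    (hβ_nonneg : ∀ t, t0 ≤ t → 0 ≤ β t)
    (hβ_loc : LocallyIntegrableOn β (Set.Ici t0))
    (hsup : ∀ t, t0 ≤ t → ∫ s in t..(t + T), β s ≤ M) :
    ∀ t, t0 ≤ t →
      (∫ s in t0..t, Real.exp (C * (s - t)) * β s) ≤
        M * (Real.exp (2 * C * T) / (Real.exp (C * T) - 1)) := by
  intro t ht
  set a : ℕ → ℝ := fun k => t0 + k * T with ha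
  set n : ℕ := ⌈(t - t0) / T⌉₊ with hn
  have hu : 0 ≤ t - t0 := by linarith
  have hmono : ∀ {i j : ℕ}, i ≤ j → a i ≤ a j := by
    intro i j hij
    simp only [ha]
    have : (i : ℝ) ≤ j := by exact_mod_cast hij
    nlinarith
  have ha0 : a 0 = t0 := by simp [ha]
  have ht0k : ∀ k : ℕ, t0 ≤ a k := fun k => ha0 ▸ hmono (Nat.zero_le k)
  have htn : t ≤ a n := by
    have h1 : (t - t0) / T ≤ (n : ℝ) := Nat.le_ceil _
    have h2 : t - t0 ≤ (n : ℝ) * T := by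
      rw [div_le_iff₀ hT] at h1; linarith
    simp only [ha]; linarith
  have hn1 : ((n : ℝ) - 1) * T ≤ t - t0 := by
    rcases Nat.eq_zero_or_pos n with h0 | h1
    · rw [h0]; push_cast; nlinarith
    · have hlt : ((n - 1 : ℕ) : ℝ) < (t - t0) / T := by
        rw [← Nat.lt_ceil]; omega
      have hc : ((n - 1 : ℕ) : ℝ) = (n : ℝ) - 1 := by
        push_cast [h1]; ring
      rw [hc] at hlt
      have h2 := (lt_div_iff₀ hT).mp hlt
      linarith
  -- integrability of β on subintervals of [t0, a n]
  have hβint : IntegrableOn β (Set.Icc t0 (a n)) volume := by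
    apply hβ_loc.integrableOn_compact_subset _ isCompact_Icc
    exact Set.Icc_subset_Ici_self
  have hβii : ∀ {x y : ℝ}, t0 ≤ x → x ≤ y → y ≤ a n → IntervalIntegrable β volume x y := by
    intro x y hx hxy hy
    rw [intervalIntegrable_iff_integrableOn_Ioc_of_le hxy]
    exact hβint.mono_set (fun s hs => ⟨le_trans hx (le_of_lt hs.1), le_trans hs.2 hy⟩)
  -- the integrand
  set f : ℝ → ℝ := fun s => Real.exp (C * (s - t)) * β s with hf
  have hfii : ∀ {x y : ℝ}, t0 ≤ x → x ≤ y → y ≤ a n → IntervalIntegrable f volume x y := by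
    intro x y hx hxy hy
    exact (hβii hx hxy hy).continuousOn_mul
      (Continuous.continuousOn (by continuity))
  have hfnonneg : ∀ s, t0 ≤ s → 0 ≤ f s := fun s hs =>
    mul_nonneg (Real.exp_nonneg _) (hβ_nonneg s hs)
  -- step 1 : ∫_{t0}^t f ≤ ∫_{t0}^{a n} f
  have step1 : (∫ s in t0..t, f s) ≤ ∫ s in t0..(a n), f s := by
    have hsplit : (∫ s in t0..t, f s) + (∫ s in t..(a n), f s) = ∫ s in t0..(a n), f s :=
      intervalIntegral.integral_add_adjacent_intervals (hfii le_rfl ht htn) (hfii ht htn le_rfl)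
    have hpos : 0 ≤ ∫ s in t..(a n), f s := by
      apply intervalIntegral.integral_nonneg htn
      intro u hu'
      exact hfnonneg u (le_trans ht hu'.1)
    linarith
  -- step 2 : split into pieces
  have step2 : (∫ s in t0..(a n), f s) =
      ∑ k ∈ Finset.range n, ∫ s in (a k)..(a (k + 1)), f s := by
    rw [← ha0]
    exact (intervalIntegral.sum_integral_adjacent_intervals
      (fun k hk => hfii (ht0k k) (hmono (Nat.le_succ k)) (hmono hk))).symm
  -- step 3 : bound each piece
  have step3 : ∀ k : ℕ, k < n →
      (∫ s in (a k)..(a (k + 1)), f s) ≤ Real.exp (C * (a (k + 1) - t)) * M := by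
    intro k hk
    have hk1 : a (k + 1) ≤ a n := hmono hk
    have hkk : a k ≤ a (k + 1) := hmono (Nat.le_succ k)
    have h1 : (∫ s in (a k)..(a (k + 1)), f s) ≤
        ∫ s in (a k)..(a (k + 1)), Real.exp (C * (a (k + 1) - t)) * β s := by
      apply intervalIntegral.integral_mono_on hkk (hfii (ht0k k) hkk hk1)
        ((hβii (ht0k k) hkk hk1).const_mul _)
      intro s hs
      apply mul_le_mul_of_nonneg_right _ (hβ_nonneg s (le_trans (ht0k k) hs.1))
      exact Real.exp_le_exp.mpr (by nlinarith [hs.2])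
    have h2 : (∫ s in (a k)..(a (k + 1)), Real.exp (C * (a (k + 1) - t)) * β s) =
        Real.exp (C * (a (k + 1) - t)) * ∫ s in (a k)..(a (k + 1)), β s := by
      exact intervalIntegral.integral_const_mul _ _
    have h3 : (∫ s in (a k)..(a (k + 1)), β s) ≤ M := by
      have : a (k + 1) = a k + T := by simp only [ha]; push_cast; ring
      rw [this]
      exact hsup (a k) (ht0k k)
    calc (∫ s in (a k)..(a (k + 1)), f s)
        ≤ Real.exp (C * (a (k + 1) - t)) * ∫ s in (a k)..(a (k + 1)), β s := by
          rw [← h2]; exact h1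
      _ ≤ Real.exp (C * (a (k + 1) - t)) * M :=
          mul_le_mul_of_nonneg_left h3 (Real.exp_nonneg _)
  -- step 4 : geometric sum
  have hr1 : (1 : ℝ) < Real.exp (C * T) := by
    have hct : 0 < C * T := by positivity
    nlinarith [Real.add_one_le_exp (C * T)]
  have hrpos : 0 < Real.exp (C * T) - 1 := by linarith
  have step4 : ∑ k ∈ Finset.range n, Real.exp (C * (a (k + 1) - t)) * M ≤
      M * (Real.exp (2 * C * T) / (Real.exp (C * T) - 1)) := by
    have hterm : ∀ k : ℕ, Real.exp (C * (a (k + 1) - t)) * M =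
        M * Real.exp (C * (t0 + T - t)) * Real.exp (C * T) ^ k := by
      intro k
      have harg : C * (a (k + 1) - t) = C * (t0 + T - t) + (k : ℝ) * (C * T) := by
        simp only [ha]
        push_cast
        ring
      rw [harg, Real.exp_add, Real.exp_nat_mul]
      ring
    simp only [hterm]
    rw [← Finset.mul_sum, geom_sum_eq (ne_of_gt hr1)]
    have hEn : Real.exp (C * T) ^ n = Real.exp (C * ((n : ℝ) * T)) := by
      rw [← Real.exp_nat_mul]; ring_nf
    have key : Real.exp (C * (t0 + T - t)) * (Real.exp (C * T) ^ n - 1) ≤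
        Real.exp (2 * C * T) := by
      calc Real.exp (C * (t0 + T - t)) * (Real.exp (C * T) ^ n - 1)
          ≤ Real.exp (C * (t0 + T - t)) * Real.exp (C * T) ^ n := by
            nlinarith [Real.exp_pos (C * (t0 + T - t))]
        _ = Real.exp (C * (t0 + T - t) + C * ((n : ℝ) * T)) := by
            rw [hEn, ← Real.exp_add]
        _ ≤ Real.exp (2 * C * T) := by
            apply Real.exp_le_exp.mpr
            nlinarith
    rw [mul_assoc, ← mul_div_assoc, ← mul_div_assoc, ← mul_div_assoc]
    rw [div_le_div_iff₀ hrpos hrpos]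
    nlinarith [mul_le_mul_of_nonneg_right (mul_le_mul_of_nonneg_left key hM.le) hrpos.le]
  calc (∫ s in t0..t, f s) ≤ ∫ s in t0..(a n), f s := step1
    _ = ∑ k ∈ Finset.range n, ∫ s in (a k)..(a (k + 1)), f s := step2
    _ ≤ ∑ k ∈ Finset.range n, Real.exp (C * (a (k + 1) - t)) * M :=
        Finset.sum_le_sum (fun k hk => step3 k (Finset.mem_range.mp hk))
    _ ≤ M * (Real.exp (2 * C * T) / (Real.exp (C * T) - 1)) := step4
end
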